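/- The sequence of differences of the Conolly-Fox sequence, d(n) = c(n) − c(n−1) (with c(0) = 0), coincides with the limit of the lists D_1 = {1}, D_k = concat[D_{k-1}, D_{k-1}, {0}]; that is, c(n) = d_1 + ... + d_n for all n ≥ 1. -/

import Mathlib

/-- `Dlist k` is the list `D_{k+1}`: `D_1 = [1]`, `D_{k+1} = D_k ++ D_k ++ [0]`. -/
def Dlist : ℕ → List ℕ
  | 0 => [1]
  | k+1 => Dlist k ++ Dlist k ++ [0]

/-- `dseq n` is the `n`-th term (1-indexed) of the limit of the lists `D_k`. -/
def dseq (n : ℕ) : ℕ := (Dlist n).getD (n - 1) 0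

/-!
Write `f n = d_1 + ⋯ + d_n`. The list `Dlist k` has length `L_k = 2 ^ (k + 1) - 1` and sum `2 ^ k`,
so `Dlist (k + 1) = Dlist k ++ Dlist k ++ [0]` gives the self-similarity
`f (L_k + j) = 2 ^ k + f j` for `j ≤ L_k`. For `n = L_{k+1} + j` with `1 ≤ j < L_{k+1}`, this turns
both arguments `n + 1 - f n` and `n - f (n - 1)` of the recurrence into `L_k` plus the
corresponding arguments at `j` (these stay in range because the number of zeros `j - f j` is
monotone), so the recurrence at `n` follows from the one at `j`; the two ends of the block are
computed directly. Since `1 ≤ f n ≤ n`, the recurrence and the initial values determine `c`,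
hence `c = f`.
-/

def ConollyFoxRec (c : ℕ → ℕ) (n : ℕ) : Prop :=
  c (n + 1) = c (n + 1 - c n) + c (n - c (n - 1))

structure IsConollyFox (c : ℕ → ℕ) : Prop where
  one : c 1 = 1
  two : c 2 = 2
  succ : ∀ n, 2 ≤ n → ConollyFoxRec c n

theorem IsConollyFox.eq_of_pos_of_le {c f : ℕ → ℕ} (hc : IsConollyFox c) (hf : IsConollyFox f)
    (hf_pos : ∀ n, 1 ≤ n → 1 ≤ f n) (hf_le : ∀ n, f n ≤ n) :
    ∀ n, 1 ≤ n → c n = f n := by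
  intro n
  induction n using Nat.strong_induction_on with
  | _ n ih =>
  intro hn
  obtain hn | hn : n ≤ 2 ∨ 3 ≤ n := by omega
  · interval_cases n
    · rw [hc.one, hf.one]
    · rw [hc.two, hf.two]
  obtain ⟨m, rfl⟩ : ∃ m, n = m + 1 := ⟨n - 1, by omega⟩
  have h₁ := hf_pos m (by omega)
  have h₂ := hf_pos (m - 1) (by omega)
  have h₃ := hf_le m
  have h₄ := hf_le (m - 1)
  rw [hc.succ m (by omega), hf.succ m (by omega), ih m (by omega) (by omega),
    ih (m - 1) (by omega) (by omega), ih (m + 1 - f m) (by omega) (by omega),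
    ih (m - f (m - 1)) (by omega) (by omega)]

theorem Dlist_length (k : ℕ) : (Dlist k).length = 2 * 2 ^ k - 1 := by
  induction k with
  | zero => rfl
  | succ k ih =>
    simp only [Dlist, List.length_append, ih, List.length_singleton, pow_succ]
    have := k.one_le_two_pow
    omega

theorem Dlist_sum (k : ℕ) : (Dlist k).sum = 2 ^ k := by
  induction k with
  | zero => rfl
  | succ k ih => simp [Dlist, ih, pow_succ, mul_two]

theorem le_one_of_mem_Dlist {k x : ℕ} (hx : x ∈ Dlist k) : x ≤ 1 := by
  induction k with
  | zero => simp_all [Dlist]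
  | succ k ih =>
    simp only [Dlist, List.mem_append, or_self, List.mem_singleton] at hx
    rcases hx with hx | rfl
    exacts [ih hx, zero_le_one]

theorem Dlist_prefix_Dlist {k m : ℕ} (h : k ≤ m) : Dlist k <+: Dlist m := by
  induction m, h using Nat.le_induction with
  | base => exact List.prefix_rfl
  | succ m _ ih => exact ih.trans ⟨Dlist m ++ [0], (List.append_assoc _ _ _).symm⟩

theorem Dlist_getD_eq_of_le {k m i : ℕ} (h : k ≤ m) (hi : i < (Dlist k).length) :
    (Dlist m).getD i 0 = (Dlist k).getD i 0 := by
  obtain ⟨t, ht⟩ := Dlist_prefix_Dlist h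
  rw [← ht, List.getD_append _ _ _ _ hi]

theorem lt_Dlist_length {n k : ℕ} (h : n ≤ 2 * 2 ^ k - 1) : n - 1 < (Dlist k).length := by
  rw [Dlist_length]
  have := k.one_le_two_pow
  omega

theorem dseq_eq_getD {n k : ℕ} (h : n ≤ 2 * 2 ^ k - 1) : dseq n = (Dlist k).getD (n - 1) 0 := by
  have hn : n ≤ 2 * 2 ^ n - 1 := by
    have := n.lt_two_pow_self
    omega
  rcases le_total n k with hnk | hkn
  · exact (Dlist_getD_eq_of_le hnk (lt_Dlist_length hn)).symm
  · exact Dlist_getD_eq_of_le hkn (lt_Dlist_length h)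

theorem dseq_le_one (n : ℕ) : dseq n ≤ 1 := by
  rw [dseq, List.getD_eq_getElem?_getD]
  cases h : (Dlist n)[n - 1]? with
  | none => exact zero_le_one
  | some x => exact le_one_of_mem_Dlist (List.mem_of_getElem? h)

def dsum (n : ℕ) : ℕ := ∑ i ∈ Finset.Icc 1 n, dseq i

@[simp]
theorem dsum_zero : dsum 0 = 0 := rfl

theorem dsum_succ (n : ℕ) : dsum (n + 1) = dsum n + dseq (n + 1) :=
  Finset.sum_Icc_succ_top (Nat.le_add_left 1 n) dseq

theorem dsum_le_self (n : ℕ) : dsum n ≤ n := by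
  induction n with
  | zero => rfl
  | succ n ih =>
    have := dseq_le_one (n + 1)
    rw [dsum_succ]
    omega

theorem dsum_eq_sum_take {n k : ℕ} (h : n ≤ 2 * 2 ^ k - 1) : dsum n = ((Dlist k).take n).sum := by
  induction n with
  | zero => simp
  | succ n ih =>
    have hn : n < (Dlist k).length := lt_Dlist_length h
    rw [dsum_succ, ih (by omega), List.sum_take_succ _ _ hn, dseq_eq_getD h,
      Nat.add_sub_cancel, List.getD_eq_getElem _ _ hn]

theorem dsum_two_mul_two_pow_sub_one_add {k j : ℕ} (hj : j ≤ 2 * 2 ^ k - 1) :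
    dsum (2 * 2 ^ k - 1 + j) = 2 ^ k + dsum j := by
  have hL := Dlist_length k
  have := k.one_le_two_pow
  rw [dsum_eq_sum_take (k := k + 1) (by rw [pow_succ]; omega), dsum_eq_sum_take hj, Dlist,
    List.append_assoc, List.take_append, List.take_of_length_le (by omega), List.take_append,
    List.sum_append, Dlist_sum, hL, Nat.add_sub_cancel_left,
    show j - (2 * 2 ^ k - 1) = 0 by omega]
  simp

theorem dsum_mono : Monotone dsum :=
  monotone_nat_of_le_succ fun n => (dsum_succ n).symm ▸ Nat.le_add_right _ _

theorem one_le_dsum {n : ℕ} (hn : 1 ≤ n) : 1 ≤ dsum n :=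
  dsum_mono hn

theorem monotone_sub_dsum : Monotone fun n => n - dsum n :=
  monotone_nat_of_le_succ fun n => by
    have := dseq_le_one (n + 1)
    have := dsum_le_self n
    rw [dsum_succ]
    omega

theorem dsum_two_mul_two_pow_sub_one (k : ℕ) : dsum (2 * 2 ^ k - 1) = 2 ^ k := by
  simpa using dsum_two_mul_two_pow_sub_one_add (k := k) (j := 0) (Nat.zero_le _)

theorem dsum_four_mul_two_pow_sub_one_add {k m : ℕ} (hm : m ≤ 4 * 2 ^ k - 1) :
    dsum (4 * 2 ^ k - 1 + m) = 2 * 2 ^ k + dsum m := by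
  have h := dsum_two_mul_two_pow_sub_one_add (k := k + 1) (j := m)
  rw [pow_succ, mul_comm _ 2, ← mul_assoc] at h
  exact h hm

theorem dsum_four_mul_two_pow_sub_one (k : ℕ) : dsum (4 * 2 ^ k - 1) = 2 * 2 ^ k := by
  simpa using dsum_four_mul_two_pow_sub_one_add (k := k) (m := 0) (Nat.zero_le _)

theorem dsum_four_mul_two_pow_sub_two (k : ℕ) : dsum (4 * 2 ^ k - 2) = 2 * 2 ^ k := by
  have := k.one_le_two_pow
  rw [show 4 * 2 ^ k - 2 = 2 * 2 ^ k - 1 + (2 * 2 ^ k - 1) by omega,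
    dsum_two_mul_two_pow_sub_one_add le_rfl, dsum_two_mul_two_pow_sub_one]
  ring

theorem conollyFoxRec_dsum_four_mul_two_pow_sub_one (k : ℕ) :
    ConollyFoxRec dsum (4 * 2 ^ k - 1) := by
  have := k.one_le_two_pow
  rw [ConollyFoxRec, dsum_four_mul_two_pow_sub_one, show 4 * 2 ^ k - 1 - 1 = 4 * 2 ^ k - 2 by omega,
    dsum_four_mul_two_pow_sub_two, show 4 * 2 ^ k - 1 + 1 - 2 * 2 ^ k = 2 * 2 ^ k - 1 + 1 by omega,
    show 4 * 2 ^ k - 1 - 2 * 2 ^ k = 2 * 2 ^ k - 1 by omega,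
    dsum_four_mul_two_pow_sub_one_add (by omega), dsum_two_mul_two_pow_sub_one_add (by omega),
    dsum_two_mul_two_pow_sub_one]
  ring

theorem conollyFoxRec_dsum_eight_mul_two_pow_sub_two (k : ℕ) :
    ConollyFoxRec dsum (8 * 2 ^ k - 2) := by
  have := k.one_le_two_pow
  have h₁ := dsum_four_mul_two_pow_sub_one (k + 1)
  have h₂ := dsum_four_mul_two_pow_sub_two (k + 1)
  rw [pow_succ, show 4 * (2 ^ k * 2) = 8 * 2 ^ k by ring,
    show 2 * (2 ^ k * 2) = 4 * 2 ^ k by ring] at h₁ h₂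
  rw [ConollyFoxRec, show 8 * 2 ^ k - 2 + 1 = 8 * 2 ^ k - 1 by omega, h₁, h₂,
    show 8 * 2 ^ k - 2 - 1 = 4 * 2 ^ k - 1 + (4 * 2 ^ k - 2) by omega,
    dsum_four_mul_two_pow_sub_one_add (by omega), dsum_four_mul_two_pow_sub_two,
    show 8 * 2 ^ k - 1 - 4 * 2 ^ k = 4 * 2 ^ k - 1 by omega,
    show 8 * 2 ^ k - 2 - (2 * 2 ^ k + 2 * 2 ^ k) = 4 * 2 ^ k - 2 by omega,
    dsum_four_mul_two_pow_sub_one, dsum_four_mul_two_pow_sub_two]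
  ring

theorem conollyFoxRec_dsum_four_mul_two_pow_sub_one_add {k j : ℕ} (hj₁ : 1 ≤ j)
    (hj : j ≤ 4 * 2 ^ k - 2) (h : ConollyFoxRec dsum j) :
    ConollyFoxRec dsum (4 * 2 ^ k - 1 + j) := by
  have hz := monotone_sub_dsum hj
  have hz' := monotone_sub_dsum (show j - 1 ≤ 4 * 2 ^ k - 2 by omega)
  have := dsum_le_self j
  have := dsum_le_self (j - 1)
  simp only [dsum_four_mul_two_pow_sub_two] at hz hz'
  rw [ConollyFoxRec, show 4 * 2 ^ k - 1 + j - 1 = 4 * 2 ^ k - 1 + (j - 1) by omega, add_assoc,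
    dsum_four_mul_two_pow_sub_one_add (m := j + 1) (by omega),
    dsum_four_mul_two_pow_sub_one_add (m := j) (by omega),
    dsum_four_mul_two_pow_sub_one_add (m := j - 1) (by omega),
    show 4 * 2 ^ k - 1 + (j + 1) - (2 * 2 ^ k + dsum j) = 2 * 2 ^ k - 1 + (j + 1 - dsum j) by
      omega,
    show 4 * 2 ^ k - 1 + j - (2 * 2 ^ k + dsum (j - 1)) = 2 * 2 ^ k - 1 + (j - dsum (j - 1)) by
      omega,
    dsum_two_mul_two_pow_sub_one_add (by omega), dsum_two_mul_two_pow_sub_one_add (by omega), h]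
  ring

theorem exists_two_pow_bounds {n : ℕ} (hn : 3 ≤ n) :
    ∃ k, 4 * 2 ^ k - 1 ≤ n ∧ n ≤ 8 * 2 ^ k - 2 := by
  have hlow : 2 ^ Nat.log 2 (n + 1) ≤ n + 1 := Nat.pow_log_le_self 2 (by omega)
  have hup : n + 1 < 2 ^ (Nat.log 2 (n + 1) + 1) := Nat.lt_pow_succ_log_self one_lt_two _
  obtain ⟨k, hk⟩ : ∃ k, Nat.log 2 (n + 1) = k + 2 :=
    ⟨_, (Nat.sub_add_cancel (Nat.le_log_of_pow_le one_lt_two (by omega))).symm⟩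
  rw [hk, pow_succ, pow_succ] at hlow
  rw [hk, pow_succ, pow_succ, pow_succ] at hup
  exact ⟨k, by omega, by omega⟩

theorem conollyFoxRec_dsum {n : ℕ} (hn : 1 ≤ n) : ConollyFoxRec dsum n := by
  induction n using Nat.strong_induction_on with
  | _ n ih =>
  obtain hn | hn : n ≤ 2 ∨ 3 ≤ n := by omega
  · interval_cases n <;> rfl
  obtain ⟨k, hkn, hnk⟩ := exists_two_pow_bounds hn
  obtain ⟨j, rfl⟩ : ∃ j, n = 4 * 2 ^ k - 1 + j := ⟨n - (4 * 2 ^ k - 1), by omega⟩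
  obtain rfl | hj₁ := Nat.eq_zero_or_pos j
  · exact conollyFoxRec_dsum_four_mul_two_pow_sub_one k
  obtain hj | rfl : j ≤ 4 * 2 ^ k - 2 ∨ j = 4 * 2 ^ k - 1 := by omega
  · exact conollyFoxRec_dsum_four_mul_two_pow_sub_one_add hj₁ hj (ih j (by omega) hj₁)
  · rw [show 4 * 2 ^ k - 1 + (4 * 2 ^ k - 1) = 8 * 2 ^ k - 2 by omega]
    exact conollyFoxRec_dsum_eight_mul_two_pow_sub_two k

theorem isConollyFox_dsum : IsConollyFox dsum :=
  ⟨by decide, by decide, fun _ hn => conollyFoxRec_dsum (by omega)⟩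

/-- The limit `{d_n}` of the lists `D_k` is the sequence of differences of the
Conolly–Fox sequence `c`: `c(n) = d_1 + ⋯ + d_n` for all `n ≥ 1` (equivalently
`d(n) = c(n) − c(n−1)` with `c(0) = 0`). -/
theorem conolly_fox_partial_sums (c : ℕ → ℕ) (h1 : c 1 = 1) (h2 : c 2 = 2)
    (hrec : ∀ n : ℕ, 2 ≤ n → c (n + 1) = c (n + 1 - c n) + c (n - c (n - 1))) :
    ∀ n : ℕ, 1 ≤ n → c n = ∑ i ∈ Finset.Icc 1 n, dseq i :=
  (IsConollyFox.mk h1 h2 hrec).eq_of_pos_of_le isConollyFox_dsum (fun _ => one_le_dsum)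
    dsum_le_self
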